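/- Let α ∈ (0,1) ∪ (1,2), χ_α > 0 and 0 < l_o < L_o < ∞, and define c: ℝ → ℝ by c(w) = (χ_α/(2π²)) |w|^{α−1} ∫_{|w|/L_o}^{|w|/l_o} u^{−α−1} sin(u) du for w ≠ 0 and c(0) = (χ_α/(2π²)) (L_o^{α−1} − l_o^{α−1})/(α−1). Then c is Lebesgue integrable on ℝ. -/

import Mathlib

/-!
Up to the constant `χ / (2π²)`, `c` agrees off `0` with
`w ↦ |w|^(α-1) ∫_{|w|/L_o}^{|w|/l_o} u^(-α-1) sin u du`. Bounding `|sin u| ≤ u` makes the integral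
at most `∫ u^(-α) du`, which scales like `|w|^(1-α)`, so this function is bounded. Integrating
by parts against `-cos` bounds the integral over `[a, b]` by `2 a^(-α-1)`, which for
`a = |w|/L_o` gives decay `O(w⁻²)`. Bounded and `O(w⁻²)` together give integrability on `ℝ`.
-/

open MeasureTheory Real Set

lemma intervalIntegrable_of_continuousOn_Ioi {f : ℝ → ℝ} (hf : ContinuousOn f (Ioi 0))
    {a b : ℝ} (ha : 0 < a) (hb : 0 < b) : IntervalIntegrable f volume a b :=
  (hf.mono fun _ hx => (lt_min ha hb).trans_le hx.1).intervalIntegrable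

lemma continuousAt_intervalIntegral_of_continuousOn_Ioi {f : ℝ → ℝ}
    (hf : ContinuousOn f (Ioi 0)) {a b : ℝ → ℝ} {x : ℝ} (ha : ContinuousAt a x)
    (hb : ContinuousAt b x) (ha0 : 0 < a x) (hb0 : 0 < b x) :
    ContinuousAt (fun w => ∫ u in a w..b w, f u) x :=
  ((intervalIntegral.integral_hasStrictFDerivAt
    (intervalIntegrable_of_continuousOn_Ioi hf ha0 hb0)
    (hf.stronglyMeasurableAtFilter isOpen_Ioi _ ha0)
    (hf.stronglyMeasurableAtFilter isOpen_Ioi _ hb0)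
    (hf.continuousAt (Ioi_mem_nhds ha0)) (hf.continuousAt (Ioi_mem_nhds hb0))).continuousAt).comp
    (f := fun w => (a w, b w)) (ha.prodMk hb)

lemma continuousOn_rpow_const_Ioi (p : ℝ) : ContinuousOn (fun u : ℝ => u ^ p) (Ioi 0) :=
  fun x hx => (continuousAt_rpow_const x p (Or.inl hx.ne')).continuousWithinAt

lemma continuousOn_rpow_const_mul_sin_Ioi (p : ℝ) :
    ContinuousOn (fun u : ℝ => u ^ p * sin u) (Ioi 0) :=
  (continuousOn_rpow_const_Ioi p).mul continuous_sin.continuousOn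

lemma abs_rpow_mul_le_rpow {x t : ℝ} (hx : 0 < x) (p : ℝ) (ht : |t| ≤ 1) :
    |x ^ p * t| ≤ x ^ p := by
  rw [abs_mul, abs_of_pos (rpow_pos_of_pos hx p)]
  exact mul_le_of_le_one_right (rpow_nonneg hx.le p) ht

lemma abs_integral_rpow_mul_sin_le {p a b : ℝ} (ha : 0 < a) (hab : a ≤ b) :
    |∫ u in a..b, u ^ p * sin u| ≤ ∫ u in a..b, u ^ (p + 1) := by
  have hb := ha.trans_le hab
  refine (intervalIntegral.abs_integral_le_integral_abs hab).trans <|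
    intervalIntegral.integral_mono_on hab
      (intervalIntegrable_of_continuousOn_Ioi (continuousOn_rpow_const_mul_sin_Ioi p) ha hb).abs
      (intervalIntegrable_of_continuousOn_Ioi (continuousOn_rpow_const_Ioi _) ha hb) ?_
  intro u hu
  have hu0 : 0 < u := ha.trans_le hu.1
  calc |u ^ p * sin u| = u ^ p * |sin u| := by rw [abs_mul, abs_of_pos (rpow_pos_of_pos hu0 p)]
    _ ≤ u ^ p * u := by
        gcongr
        exact (abs_sin_le_abs).trans (abs_of_pos hu0).le
    _ = u ^ (p + 1) := (rpow_add_one hu0.ne' p).symm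

lemma abs_integral_rpow_mul_sin_le_two_mul {p a b : ℝ} (hp : p < 0) (ha : 0 < a)
    (hab : a ≤ b) : |∫ u in a..b, u ^ p * sin u| ≤ 2 * a ^ p := by
  have hb := ha.trans_le hab
  have hpos : ∀ x ∈ uIcc a b, 0 < x := fun x hx => (lt_min ha hb).trans_le hx.1
  have hderiv : ∀ x ∈ uIcc a b, HasDerivAt (fun u : ℝ => u ^ p) (p * x ^ (p - 1)) x :=
    fun x hx => hasDerivAt_rpow_const (Or.inl (hpos x hx).ne')
  have hint : IntervalIntegrable (fun x : ℝ => p * x ^ (p - 1)) volume a b :=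
    intervalIntegrable_of_continuousOn_Ioi
      (continuousOn_const.mul (continuousOn_rpow_const_Ioi _)) ha hb
  have hparts : ∫ u in a..b, u ^ p * sin u
      = b ^ p * -cos b - a ^ p * -cos a - ∫ u in a..b, p * u ^ (p - 1) * -cos u :=
    intervalIntegral.integral_mul_deriv_eq_deriv_mul hderiv
      (fun x _ => (hasDerivAt_cos x).neg.congr_deriv (neg_neg _)) hint
      (continuous_sin.intervalIntegrable a b)
  have hftc : ∫ u in a..b, p * u ^ (p - 1) = b ^ p - a ^ p :=
    intervalIntegral.integral_eq_sub_of_hasDerivAt hderiv hint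
  have hremainder : |∫ u in a..b, p * u ^ (p - 1) * -cos u| ≤ a ^ p - b ^ p := by
    calc |∫ u in a..b, p * u ^ (p - 1) * -cos u|
        ≤ ∫ u in a..b, |p * u ^ (p - 1) * -cos u| :=
          intervalIntegral.abs_integral_le_integral_abs hab
      _ ≤ ∫ u in a..b, -(p * u ^ (p - 1)) := by
          refine intervalIntegral.integral_mono_on hab
            (hint.mul_continuousOn continuous_cos.neg.continuousOn).abs hint.neg ?_
          intro u hu
          have hweight : p * u ^ (p - 1) ≤ 0 := mul_nonpos_of_nonpos_of_nonneg hp.le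
            (rpow_nonneg (hpos u (Icc_subset_uIcc hu)).le _)
          rw [abs_mul, abs_neg, abs_of_nonpos hweight]
          exact mul_le_of_le_one_right (neg_nonneg.2 hweight) (abs_cos_le_one u)
      _ = a ^ p - b ^ p := by rw [intervalIntegral.integral_neg, hftc, neg_sub]
  have hbdry_b := abs_rpow_mul_le_rpow hb p (t := -cos b) (by simpa using abs_cos_le_one b)
  have hbdry_a := abs_rpow_mul_le_rpow ha p (t := -cos a) (by simpa using abs_cos_le_one a)
  rw [hparts]
  calc _ ≤ |b ^ p * -cos b| + |a ^ p * -cos a| + |∫ u in a..b, p * u ^ (p - 1) * -cos u| :=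
        (abs_sub _ _).trans (by gcongr; exact abs_sub _ _)
    _ ≤ 2 * a ^ p := by linarith

lemma div_rpow_eq_rpow_mul_rpow_neg {a x : ℝ} (ha : 0 ≤ a) (hx : 0 < x) (p : ℝ) :
    (a / x) ^ p = a ^ p * x ^ (-p) := by
  rw [div_eq_mul_inv, mul_rpow ha (inv_nonneg.2 hx.le), inv_rpow hx.le, ← rpow_neg hx.le]

noncomputable def scaledSinIntegral (α l L w : ℝ) : ℝ :=
  |w| ^ (α - 1) * ∫ u in |w| / L..|w| / l, u ^ (-α - 1) * sin u

section scaledSinIntegral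

variable {α l L : ℝ}

lemma continuousOn_scaledSinIntegral (hl : 0 < l) (hL : 0 < L) :
    ContinuousOn (scaledSinIntegral α l L) {0}ᶜ := by
  intro w hw
  have hw0 : 0 < |w| := abs_pos.2 hw
  have habs : ContinuousAt (fun w : ℝ => |w|) w := continuous_abs.continuousAt
  exact ((continuousAt_rpow_const _ _ (Or.inl hw0.ne')).comp habs |>.mul
    (continuousAt_intervalIntegral_of_continuousOn_Ioi (continuousOn_rpow_const_mul_sin_Ioi _)
      (habs.div_const L) (habs.div_const l) (div_pos hw0 hL) (div_pos hw0 hl))).continuousWithinAt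

lemma abs_scaledSinIntegral_le (hα : α ≠ 1) (hl : 0 < l) (hlL : l ≤ L) {w : ℝ} (hw : w ≠ 0) :
    |scaledSinIntegral α l L w| ≤ (l ^ (α - 1) - L ^ (α - 1)) / (1 - α) := by
  have hw0 : 0 < |w| := abs_pos.2 hw
  have hL := hl.trans_le hlL
  have hlower : 0 < |w| / L := div_pos hw0 hL
  have hle : |w| / L ≤ |w| / l := by gcongr
  have hnot_mem : (0 : ℝ) ∉ uIcc (|w| / L) (|w| / l) := fun h0 =>
    (lt_min hlower (div_pos hw0 hl)).not_ge h0.1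
  have hintegral : ∫ u in |w| / L..|w| / l, u ^ (-α - 1 + 1)
      = |w| ^ (1 - α) * ((l ^ (α - 1) - L ^ (α - 1)) / (1 - α)) := by
    rw [integral_rpow (Or.inr ⟨fun h => hα (by linarith), hnot_mem⟩),
      div_rpow_eq_rpow_mul_rpow_neg hw0.le hl, div_rpow_eq_rpow_mul_rpow_neg hw0.le hL,
      show -α - 1 + 1 + 1 = 1 - α by ring, show -(1 - α) = α - 1 by ring]
    ring
  have hcancel : |w| ^ (α - 1) * |w| ^ (1 - α) = 1 := by
    rw [← rpow_add hw0, show α - 1 + (1 - α) = 0 by ring, rpow_zero]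
  rw [scaledSinIntegral, abs_mul, abs_of_pos (rpow_pos_of_pos hw0 _)]
  calc _ ≤ |w| ^ (α - 1) * ∫ u in |w| / L..|w| / l, u ^ (-α - 1 + 1) := by
        gcongr
        exact abs_integral_rpow_mul_sin_le hlower hle
    _ = _ := by rw [hintegral, ← mul_assoc, hcancel, one_mul]

lemma abs_scaledSinIntegral_mul_sq_le (hα : 0 < α) (hl : 0 < l) (hlL : l ≤ L) {w : ℝ}
    (hw : w ≠ 0) : |scaledSinIntegral α l L w| * w ^ 2 ≤ 2 * L ^ (α + 1) := by
  have hw0 : 0 < |w| := abs_pos.2 hw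
  have hL := hl.trans_le hlL
  have hcancel : |w| ^ (α - 1) * |w| ^ (-α - 1) * w ^ 2 = 1 := by
    rw [← rpow_add hw0, ← sq_abs, ← rpow_natCast, ← rpow_add hw0, Nat.cast_ofNat,
      show α - 1 + (-α - 1) + 2 = 0 by ring, rpow_zero]
  rw [scaledSinIntegral, abs_mul, abs_of_pos (rpow_pos_of_pos hw0 _)]
  calc _ ≤ |w| ^ (α - 1) * (2 * (|w| / L) ^ (-α - 1)) * w ^ 2 := by
        gcongr
        exact abs_integral_rpow_mul_sin_le_two_mul (by linarith) (div_pos hw0 hL) (by gcongr)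
    _ = 2 * L ^ (α + 1) * (|w| ^ (α - 1) * |w| ^ (-α - 1) * w ^ 2) := by
        rw [div_rpow_eq_rpow_mul_rpow_neg hw0.le hL, show -(-α - 1) = α + 1 by ring]
        ring
    _ = 2 * L ^ (α + 1) := by rw [hcancel, mul_one]

end scaledSinIntegral

lemma integrable_of_abs_le_of_abs_mul_sq_le {f : ℝ → ℝ} (hf : AEStronglyMeasurable f)
    {A B : ℝ} (hA : ∀ᵐ w, |f w| ≤ A) (hB : ∀ᵐ w, |f w| * w ^ 2 ≤ B) : Integrable f := by
  refine (integrable_inv_one_add_sq.const_mul (A + B)).mono' hf ?_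
  filter_upwards [hA, hB] with w hwA hwB
  rw [norm_eq_abs, ← div_eq_mul_inv, le_div_iff₀ (by positivity), mul_add, mul_one]
  linarith

lemma integrable_scaledSinIntegral {α l L : ℝ} (hα0 : 0 < α) (hα1 : α ≠ 1) (hl : 0 < l)
    (hlL : l ≤ L) : Integrable (scaledSinIntegral α l L) := by
  have hmeas : AEStronglyMeasurable (scaledSinIntegral α l L) := by
    rw [← restrict_compl_singleton (μ := volume) 0]
    exact (continuousOn_scaledSinIntegral hl (hl.trans_le hlL)).aestronglyMeasurable
      (measurableSet_singleton 0).compl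
  exact integrable_of_abs_le_of_abs_mul_sq_le hmeas
    ((volume.ae_ne 0).mono fun _ hw => abs_scaledSinIntegral_le hα1 hl hlL hw)
    ((volume.ae_ne 0).mono fun _ hw => abs_scaledSinIntegral_mul_sq_le hα0 hl hlL hw)

theorem stmt16_general (α χ lo Lo : ℝ) (hα : α ∈ Set.Ioo (0:ℝ) 1 ∪ Set.Ioo (1:ℝ) 2)
    (hlo : 0 < lo) (hLo : lo < Lo)
    (c : ℝ → ℝ)
    (hc : ∀ w : ℝ, w ≠ 0 → c w = (χ / (2 * π ^ 2)) * |w| ^ (α - 1) *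
      ∫ u in (|w| / Lo)..(|w| / lo), u ^ (-α - 1) * Real.sin u) :
    Integrable c := by
  have hα0 : 0 < α := by rcases hα with h | h <;> linarith [h.1]
  have hα1 : α ≠ 1 := by rcases hα with h | h <;> [exact h.2.ne; exact h.1.ne']
  refine ((integrable_scaledSinIntegral hα0 hα1 hlo hLo.le).const_mul (χ / (2 * π ^ 2))).congr ?_
  filter_upwards [volume.ae_ne 0] with w hw
  rw [hc w hw, scaledSinIntegral, mul_assoc]

/-- Let `α ∈ (0,1) ∪ (1,2)`, `χ_α > 0`, `0 < l_o < L_o < ∞`, and let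
`c : ℝ → ℝ` be given by `c(w) = (χ_α/(2π²)) |w|^{α-1} ∫_{|w|/L_o}^{|w|/l_o} u^{-α-1} sin u du`
for `w ≠ 0` and `c(0) = (χ_α/(2π²)) (L_o^{α-1} - l_o^{α-1})/(α-1)`.
Then `c` is Lebesgue integrable on `ℝ`. -/
theorem stmt16 (α χ lo Lo : ℝ) (hα : α ∈ Set.Ioo (0:ℝ) 1 ∪ Set.Ioo (1:ℝ) 2)
    (hχ : 0 < χ) (hlo : 0 < lo) (hLo : lo < Lo)
    (c : ℝ → ℝ)
    (hc0 : c 0 = (χ / (2 * π ^ 2)) * (Lo ^ (α - 1) - lo ^ (α - 1)) / (α - 1))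
    (hc : ∀ w : ℝ, w ≠ 0 → c w = (χ / (2 * π ^ 2)) * |w| ^ (α - 1) *
      ∫ u in (|w| / Lo)..(|w| / lo), u ^ (-α - 1) * Real.sin u) :
    Integrable c :=
  stmt16_general α χ lo Lo hα hlo hLo c hc
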